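/- For all n ≥ 1, the p-singular word z_n is not a factor of the product z_0 z_1 ⋯ z_{n−1}. -/
import Mathlib


/-- The `m`-bonacci morphism `φ_m` on letters:
`φ_m(k) = 0·(k+1)` for `0 ≤ k ≤ m-2`, and `φ_m(m-1) = 0`. -/
def phiL (m a : ℕ) : List ℕ := if a = m - 1 then [0] else [0, a + 1]

/-- The `m`-bonacci morphism applied to a finite word. -/
def phiW (m : ℕ) (u : List ℕ) : List ℕ := u.flatMap (phiL m)

/-- The iterates `h n = φ_mⁿ(0)`. -/
def hword (m : ℕ) : ℕ → List ℕ
  | 0 => [0]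
  | n + 1 => phiW m (hword m n)

/-- The `m`-bonacci word, the infinite fixed point of `φ_m` beginning with `0`
(its `i`-th letter is the `i`-th letter of any sufficiently long iterate `φ_mⁿ(0)`). -/
def mbon (m : ℕ) : ℕ → ℕ := fun i => (hword m (i + 1)).getD i 0

/-- Auxiliary course-of-values construction for the p-singular words:
`zsAux m (k+1) i` gives the correct value of the (index-shifted) p-singular word
`z_{i-1}` for every `i ≤ k`. -/
def zsAux (m : ℕ) : ℕ → ℕ → List ℕ
  | 0, _ => []
  | k + 1, i =>
    if i < k then zsAux m k i
    else if i = 0 then []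
    else if i = 1 then [0]
    else if i ≤ m then
      -- here `i = n+1` with `1 ≤ n ≤ m-1`:
      -- `z_n = z_{n-2} z_{n-3} ⋯ z_1 z_0 · n · z_0 z_1 ⋯ z_{n-3} z_{n-2}`
      (((List.range (i - 2)).map (fun j => zsAux m k (i - 2 - j))).flatten)
        ++ [i - 1]
        ++ (((List.range (i - 2)).map (fun j => zsAux m k (1 + j))).flatten)
    else
      -- here `i = n+1` with `n ≥ m`:
      -- `z_n = z_{n-2} ⋯ z_{n-(m-1)} · z_{n-m} · z_{n-(m+1)} · z_{n-m} · z_{n-(m-1)} ⋯ z_{n-2}`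
      (((List.range (m - 2)).map (fun j => zsAux m k (i - 2 - j))).flatten)
        ++ zsAux m k (i - m) ++ zsAux m k (i - m - 1) ++ zsAux m k (i - m)
        ++ (((List.range (m - 2)).map (fun j => zsAux m k (i - m + 1 + j))).flatten)

/-- The (index-shifted) p-singular words for the `m`-bonacci word:
`zsw m 0 = z₋₁ = ε`, and `zsw m (n+1) = zₙ` for `n ≥ 0`, where
`z₀ = 0`, `zₙ = z_{n-2} z_{n-3} ⋯ z_1 z_0 · n · z_0 z_1 ⋯ z_{n-3} z_{n-2}` for `1 ≤ n ≤ m-1`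
(`n` denoting the single letter `n`), and
`zₙ = z_{n-2} z_{n-3} ⋯ z_{n-(m-1)} z_{n-m} z_{n-(m+1)} z_{n-m} z_{n-(m-1)} ⋯ z_{n-3} z_{n-2}`
for `n ≥ m`. -/
def zsw (m k : ℕ) : List ℕ := zsAux m (k + 1) k

lemma zsAux_eq (m k i : ℕ) : zsAux m (k+1) i = if i < k then zsAux m k i
    else if i = 0 then []
    else if i = 1 then [0]
    else if i ≤ m then
      (((List.range (i - 2)).map (fun j => zsAux m k (i - 2 - j))).flatten)
        ++ [i - 1]
        ++ (((List.range (i - 2)).map (fun j => zsAux m k (1 + j))).flatten)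
    else
      (((List.range (m - 2)).map (fun j => zsAux m k (i - 2 - j))).flatten)
        ++ zsAux m k (i - m) ++ zsAux m k (i - m - 1) ++ zsAux m k (i - m)
        ++ (((List.range (m - 2)).map (fun j => zsAux m k (i - m + 1 + j))).flatten) := rfl

lemma zsAux_stab (m : ℕ) : ∀ k i, i < k → zsAux m k i = zsw m i := by
  intro k
  induction k with
  | zero => intro i hi; omega
  | succ k IH =>
    intro i hi
    rcases Nat.lt_or_ge i k with h | h
    · rw [zsAux_eq, if_pos h, IH i h]
    · have : i = k := by omega
      subst this
      rfl

/-- descending product: `e_a e_{a-1} ⋯ e_{a-len+1}` -/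
def dsc (m a len : ℕ) : List ℕ := (((List.range len).map (fun j => zsw m (a - j))).flatten)
/-- ascending product: `e_b e_{b+1} ⋯ e_{b+len-1}` -/
def asc (m b len : ℕ) : List ℕ := (((List.range len).map (fun j => zsw m (b + j))).flatten)

lemma zsw_small' (m i : ℕ) (h2 : 2 ≤ i) (him : i ≤ m) :
    zsw m i = dsc m (i-2) (i-2) ++ [i-1] ++ asc m 1 (i-2) := by
  show zsAux m (i+1) i = _
  rw [zsAux_eq, if_neg (by omega), if_neg (by omega), if_neg (by omega), if_pos him]
  have h1 : List.map (fun j => zsAux m i (i - 2 - j)) (List.range (i-2))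
      = List.map (fun j => zsw m ((i-2) - j)) (List.range (i-2)) := by
    apply List.map_congr_left
    intro j hj
    simp only [List.mem_range] at hj
    rw [zsAux_stab m i _ (by omega)]
  have h2 : List.map (fun j => zsAux m i (1 + j)) (List.range (i-2))
      = List.map (fun j => zsw m (1 + j)) (List.range (i-2)) := by
    apply List.map_congr_left
    intro j hj
    simp only [List.mem_range] at hj
    rw [zsAux_stab m i _ (by omega)]
  rw [h1, h2]
  rfl

lemma zsw_large' (m i : ℕ) (hm : 2 ≤ m) (h : m < i) :
    zsw m i = dsc m (i-2) (m-2) ++ zsw m (i-m) ++ zsw m (i-m-1) ++ zsw m (i-m)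
      ++ asc m (i-m+1) (m-2) := by
  show zsAux m (i+1) i = _
  rw [zsAux_eq, if_neg (by omega), if_neg (by omega), if_neg (by omega), if_neg (by omega)]
  rw [zsAux_stab m i _ (by omega), zsAux_stab m i _ (by omega)]
  have h1 : List.map (fun j => zsAux m i (i - 2 - j)) (List.range (m-2))
      = List.map (fun j => zsw m ((i-2) - j)) (List.range (m-2)) := by
    apply List.map_congr_left
    intro j hj
    simp only [List.mem_range] at hj
    rw [zsAux_stab m i _ (by omega)]
  have h2 : List.map (fun j => zsAux m i (i - m + 1 + j)) (List.range (m-2))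
      = List.map (fun j => zsw m (i - m + 1 + j)) (List.range (m-2)) := by
    apply List.map_congr_left
    intro j hj
    simp only [List.mem_range] at hj
    rw [zsAux_stab m i _ (by omega)]
  rw [h1, h2]
  rfl
lemma dsc_zero (m a : ℕ) : dsc m a 0 = [] := rfl
lemma asc_zero (m b : ℕ) : asc m b 0 = [] := rfl

lemma dsc_succ_front (m a len : ℕ) : dsc m a (len+1) = zsw m a ++ dsc m (a-1) len := by
  unfold dsc
  rw [List.range_succ_eq_map]
  simp only [List.map_cons, List.map_map, List.flatten_cons, Nat.sub_zero]
  refine congrArg _ (congrArg List.flatten ?_)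
  apply List.map_congr_left
  intro j _
  simp only [Function.comp]
  congr 1
  omega

lemma asc_succ_front (m b len : ℕ) : asc m b (len+1) = zsw m b ++ asc m (b+1) len := by
  unfold asc
  rw [List.range_succ_eq_map]
  simp only [List.map_cons, List.map_map, List.flatten_cons, Nat.add_zero]
  refine congrArg _ (congrArg List.flatten ?_)
  apply List.map_congr_left
  intro j _
  simp only [Function.comp]
  congr 1
  omega

lemma asc_succ_back (m b len : ℕ) : asc m b (len+1) = asc m b len ++ zsw m (b+len) := by
  unfold asc
  rw [List.range_succ]
  simp

lemma dsc_succ_back (m a len : ℕ) : dsc m a (len+1) = dsc m a len ++ zsw m (a-len) := by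
  unfold dsc
  rw [List.range_succ]
  simp

def pad (k : ℕ) : List ℕ := if k % 2 = 1 then [0] else []
lemma pad_congr {a b : ℕ} (h : a % 2 = b % 2) : pad a = pad b := by unfold pad; rw [h]
lemma chainL {α : Type} {a b c d : List α} (h : a ++ b = c ++ d) (X : List α) :
    a ++ (b ++ X) = c ++ (d ++ X) := by
  rw [← List.append_assoc, h, List.append_assoc]

lemma phiW_append (m : ℕ) (u v : List ℕ) : phiW m (u ++ v) = phiW m u ++ phiW m v := by
  simp [phiW]
lemma phiW_cons (m a : ℕ) (u : List ℕ) : phiW m (a :: u) = phiL m a ++ phiW m u := by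
  simp [phiW]
lemma phiW_nil (m : ℕ) : phiW m [] = [] := rfl

/-- Telescoping for descending products. -/
lemma TD (m c : ℕ)
    (HS : ∀ j, j < c → phiW m (zsw m j) ++ pad (j+1) = pad j ++ zsw m (j+1)) :
    ∀ len a, len ≤ a → a < c →
      phiW m (dsc m a len) ++ pad (a - len) = pad a ++ dsc m (a+1) len := by
  intro len
  induction len with
  | zero => intro a _ _; simp [dsc_zero, phiW_nil]
  | succ len IH =>
    intro a hla hac
    rw [dsc_succ_front, phiW_append, List.append_assoc]
    have e1 : a - (len+1) = (a-1) - len := by omega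
    rw [e1]
    have h2 := IH (a-1) (by omega) (by omega)
    rw [h2]
    have e2 : a - 1 + 1 = a := by omega
    rw [e2]
    have h3 : pad (a-1) = pad (a+1) := pad_congr (by omega)
    rw [h3, ← List.append_assoc, HS a hac, List.append_assoc]
    congr 1
    rw [dsc_succ_front]
    simp

/-- Telescoping for ascending products. -/
lemma TA (m c : ℕ)
    (HS : ∀ j, j < c → phiW m (zsw m j) ++ pad (j+1) = pad j ++ zsw m (j+1)) :
    ∀ len b, b + len ≤ c →
      phiW m (asc m b len) ++ pad (b + len) = pad b ++ asc m (b+1) len := by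
  intro len
  induction len with
  | zero => intro b _; simp [asc_zero, phiW_nil]
  | succ len IH =>
    intro b hb
    rw [asc_succ_back, phiW_append, List.append_assoc]
    have e1 : b + (len+1) = (b + len) + 1 := by omega
    rw [e1, HS (b+len) (by omega)]
    rw [← List.append_assoc, IH b (by omega), List.append_assoc]
    congr 1
    rw [asc_succ_back]
    congr 2
    omega

lemma zsw_zero (m : ℕ) : zsw m 0 = [] := rfl
lemma zsw_one (m : ℕ) : zsw m 1 = [0] := rfl
theorem Sthm (m : ℕ) (hm : 2 ≤ m) :
    ∀ i, phiW m (zsw m i) ++ pad (i+1) = pad i ++ zsw m (i+1) := by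
  intro i
  induction i using Nat.strong_induction_on with
  | _ i IH =>
  have HS : ∀ j, j < i → phiW m (zsw m j) ++ pad (j+1) = pad j ++ zsw m (j+1) := IH
  have hz2 : zsw m 2 = [1] := by
    have h := zsw_small' m 2 le_rfl hm
    simpa [dsc_zero, asc_zero] using h
  rcases Nat.lt_or_ge i 2 with hi2 | hi2
  · -- i = 0 or i = 1
    interval_cases i
    · show phiW m [] ++ pad 1 = pad 0 ++ zsw m 1
      show [] ++ pad 1 = pad 0 ++ [0]
      simp [pad]
    · show phiW m [0] ++ pad 2 = pad 1 ++ zsw m 2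
      rw [hz2]
      have h0 : ¬ ((0:ℕ) = m - 1) := by omega
      simp [phiW, phiL, h0, pad]
  · rcases Nat.lt_or_ge i m with him | him
    · -- case 2 ≤ i < m
      obtain ⟨j, rfl⟩ : ∃ j, i = j + 2 := ⟨i - 2, by omega⟩
      have hei : zsw m (j+2) = dsc m j j ++ [j+1] ++ asc m 1 j := by
        have h := zsw_small' m (j+2) (by omega) (by omega)
        simpa using h
      have hei1 : zsw m (j+3) = dsc m (j+1) (j+1) ++ [j+2] ++ asc m 1 (j+1) := by
        have h := zsw_small' m (j+3) (by omega) (by omega)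
        have e1 : j + 3 - 2 = j + 1 := by omega
        have e2 : j + 3 - 1 = j + 2 := by omega
        rw [e1, e2] at h
        exact h
      have e3 : j + 2 + 1 = j + 3 := by omega
      rw [e3, hei, hei1, phiW_append, phiW_append]
      have hM : phiW m [j+1] = [0] ++ [j+2] := by
        have hne : ¬ (j + 1 = m - 1) := by omega
        simp [phiW, phiL, hne]
      have hD : phiW m (dsc m j j) = pad (j+2) ++ dsc m (j+1) j := by
        have h := TD m (j+2) HS j j le_rfl (by omega)
        simp only [Nat.sub_self] at h
        have hp0 : pad 0 = [] := rfl
        rw [hp0, List.append_nil] at h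
        rw [h]
        congr 1
        exact pad_congr (by omega)
      have hA : phiW m (asc m 1 j) ++ pad (j+3) = [0] ++ asc m 2 j := by
        have h := TA m (j+2) HS j 1 (by omega)
        have e4 : pad (1 + j) = pad (j+3) := pad_congr (by omega)
        rw [e4] at h
        rw [h]
        rfl
      have hD2 : dsc m (j+1) (j+1) = dsc m (j+1) j ++ [0] := by
        rw [dsc_succ_back]
        have : j + 1 - j = 1 := by omega
        rw [this]
        rfl
      have hA2 : asc m 1 (j+1) = [0] ++ asc m 2 j := by
        rw [asc_succ_front]
        rfl
      rw [hD2, hA2, hM, hD]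
      rw [List.append_assoc, List.append_assoc, hA]
      simp [List.append_assoc]
    · rcases Nat.eq_or_lt_of_le him with hieq | hilt
      · -- case i = m
        subst hieq
        have hei : zsw m m = dsc m (m-2) (m-2) ++ [m-1] ++ asc m 1 (m-2) :=
          zsw_small' m m hm le_rfl
        have hei1 : zsw m (m+1)
            = dsc m (m-1) (m-2) ++ [0] ++ [] ++ [0] ++ asc m 2 (m-2) := by
          have h := zsw_large' m (m+1) hm (by omega)
          have e1 : m + 1 - 2 = m - 1 := by omega
          have e2 : m + 1 - m = 1 := by omega
          rw [e1, e2] at h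
          have e3 : (1:ℕ) - 1 = 0 := rfl
          have e4 : (1:ℕ) + 1 = 2 := rfl
          rw [e3, e4, zsw_zero, zsw_one] at h
          exact h
        have hM : phiW m [m-1] = [0] := by simp [phiW, phiL]
        have hD : phiW m (dsc m (m-2) (m-2)) = pad m ++ dsc m (m-1) (m-2) := by
          have h := TD m m HS (m-2) (m-2) le_rfl (by omega)
          simp only [Nat.sub_self] at h
          have hp0 : pad 0 = [] := rfl
          have e5 : m - 2 + 1 = m - 1 := by omega
          rw [hp0, List.append_nil, e5] at h
          rw [h]
          congr 1
          exact pad_congr (by omega)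
        have hA : phiW m (asc m 1 (m-2)) ++ pad (m+1) = [0] ++ asc m 2 (m-2) := by
          have h := TA m m HS (m-2) 1 (by omega)
          have e6 : pad (1 + (m-2)) = pad (m+1) := pad_congr (by omega)
          rw [e6] at h
          rw [h]
          rfl
        rw [hei, hei1, phiW_append, phiW_append, hM, hD]
        rw [List.append_assoc, List.append_assoc, hA]
        simp [List.append_assoc]
      · -- case m < i
        set k := i - m with hk
        have hk1 : 1 ≤ k := by omega
        have hei : zsw m i
            = dsc m (i-2) (m-2) ++ zsw m k ++ zsw m (k-1) ++ zsw m k ++ asc m (k+1) (m-2) := by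
          have h := zsw_large' m i hm hilt
          have e1 : i - m + 1 = k + 1 := by omega
          rw [e1, ← hk] at h
          exact h
        have hei1 : zsw m (i+1)
            = dsc m (i-1) (m-2) ++ zsw m (k+1) ++ zsw m k ++ zsw m (k+1) ++ asc m (k+2) (m-2) := by
          have h := zsw_large' m (i+1) hm (by omega)
          have e1 : i + 1 - 2 = i - 1 := by omega
          have e2 : i + 1 - m = k + 1 := by omega
          have e3 : k + 1 - 1 = k := by omega
          have e4 : k + 1 + 1 = k + 2 := by omega
          rw [e1, e2, e3, e4] at h
          exact h
        have G1 : phiW m (asc m (k+1) (m-2)) ++ pad (i+1) = pad (k+1) ++ asc m (k+2) (m-2) := by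
          have h := TA m i HS (m-2) (k+1) (by omega)
          have e : pad (k + 1 + (m-2)) = pad (i+1) := pad_congr (by omega)
          rw [e] at h
          rw [h]
        have G2 : phiW m (zsw m k) ++ pad (k+1) = pad k ++ zsw m (k+1) := HS k (by omega)
        have G3 : phiW m (zsw m (k-1)) ++ pad k = pad (k-1) ++ zsw m k := by
          have h := HS (k-1) (by omega)
          have e : k - 1 + 1 = k := by omega
          rw [e] at h
          exact h
        have G4 : phiW m (zsw m k) ++ pad (k-1) = pad k ++ zsw m (k+1) := by
          have e : pad (k-1) = pad (k+1) := pad_congr (by omega)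
          rw [e]
          exact G2
        have G5 : phiW m (dsc m (i-2) (m-2)) ++ pad k = pad i ++ dsc m (i-1) (m-2) := by
          have h := TD m i HS (m-2) (i-2) (by omega) (by omega)
          have e1 : i - 2 - (m-2) = k := by omega
          have e2 : i - 2 + 1 = i - 1 := by omega
          have e3 : pad (i-2) = pad i := pad_congr (by omega)
          rw [e1, e2, e3] at h
          exact h
        rw [hei, hei1, phiW_append, phiW_append, phiW_append, phiW_append]
        rw [List.append_assoc, List.append_assoc, List.append_assoc, List.append_assoc]
        rw [G1, chainL G2, chainL G3, chainL G4, chainL G5]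
        simp [List.append_assoc]

lemma phiW_head (m : ℕ) {u : List ℕ} (h : u ≠ []) : ∃ v, phiW m u = 0 :: v := by
  rcases u with _ | ⟨a, u⟩
  · simp at h
  · rw [phiW_cons]
    unfold phiL
    split <;> exact ⟨_, rfl⟩

lemma zsw_ne_nil (m : ℕ) (hm : 2 ≤ m) : ∀ i, 1 ≤ i → zsw m i ≠ [] := by
  intro i
  induction i using Nat.strong_induction_on with
  | _ i IH =>
  intro hi
  rcases Nat.lt_or_ge i 2 with h2 | h2
  · have : i = 1 := by omega
    subst this
    simp [zsw_one]
  rcases Nat.lt_or_ge m i with hlt | hle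
  · have h1 : zsw m (i - m) ≠ [] := IH (i - m) (by omega) (by omega)
    intro h
    rw [zsw_large' m i hm hlt] at h
    have hl := congrArg List.length h
    simp only [List.length_append, List.length_nil] at hl
    have : 0 < (zsw m (i-m)).length := List.length_pos_iff.mpr h1
    omega
  · intro h
    rw [zsw_small' m i h2 hle] at h
    have hl := congrArg List.length h
    simp only [List.length_append, List.length_nil, List.length_cons] at hl
    omega

lemma even_step (m : ℕ) (hm : 2 ≤ m) {j : ℕ} (hj : Even j) :
    zsw m (j+1) = phiW m (zsw m j) ++ [0] := by
  have h := Sthm m hm j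
  have h1 : pad j = [] := by simp [pad, Nat.even_iff.mp hj]
  have h2 : pad (j+1) = [0] := by
    have hj0 : j % 2 = 0 := Nat.even_iff.mp hj
    have : (j+1) % 2 = 1 := by omega
    simp [pad, this]
  rw [h1, h2] at h
  simpa using h.symm

lemma odd_step (m : ℕ) (hm : 2 ≤ m) {j : ℕ} (hj : Odd j) :
    phiW m (zsw m j) = 0 :: zsw m (j+1) := by
  have h := Sthm m hm j
  have h1 : pad j = [0] := by simp [pad, Nat.odd_iff.mp hj]
  have h2 : pad (j+1) = [] := by
    have hj0 : j % 2 = 1 := Nat.odd_iff.mp hj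
    have : (j+1) % 2 = 0 := by omega
    simp [pad, this]
  rw [h1, h2, List.append_nil] at h
  simpa using h

lemma odd_head (m : ℕ) (hm : 2 ≤ m) {j : ℕ} (hj : Odd j) : ∃ u, zsw m j = 0 :: u := by
  obtain ⟨r, hr⟩ : ∃ r, j = r + 1 := ⟨j - 1, by rcases hj with ⟨c, hc⟩; omega⟩
  subst hr
  have hr' : Even r := by
    rcases hj with ⟨c, hc⟩
    exact ⟨c, by omega⟩
  rw [even_step m hm hr']
  by_cases hne : zsw m r = []
  · rw [hne]
    exact ⟨[], rfl⟩
  · obtain ⟨v, hv⟩ := phiW_head m hne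
    rw [hv]
    exact ⟨v ++ [0], by simp⟩

lemma odd_last (m : ℕ) (hm : 2 ≤ m) {j : ℕ} (hj : Odd j) : ∃ u, zsw m j = u ++ [0] := by
  obtain ⟨r, hr⟩ : ∃ r, j = r + 1 := ⟨j - 1, by rcases hj with ⟨c, hc⟩; omega⟩
  subst hr
  have hr' : Even r := by
    rcases hj with ⟨c, hc⟩
    exact ⟨c, by omega⟩
  exact ⟨phiW m (zsw m r), even_step m hm hr'⟩

lemma phiL_zero (m : ℕ) (hm : 2 ≤ m) : phiL m 0 = [0, 1] := by
  unfold phiL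
  rw [if_neg (by omega)]

lemma even_head (m : ℕ) (hm : 2 ≤ m) {j : ℕ} (hj : Odd j) : ∃ u, zsw m (j+1) = 1 :: u := by
  obtain ⟨u, hu⟩ := odd_head m hm hj
  have h := odd_step m hm hj
  rw [hu, phiW_cons, phiL_zero m hm] at h
  exact ⟨phiW m u, by
    have : (0:ℕ) :: 1 :: phiW m u = 0 :: zsw m (j+1) := h
    exact (List.cons.injEq _ _ _ _).mp this |>.2.symm⟩

lemma even_last (m : ℕ) (hm : 2 ≤ m) {j : ℕ} (hj : Odd j) : ∃ u, zsw m (j+1) = u ++ [1] := by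
  obtain ⟨u, hu⟩ := odd_last m hm hj
  have h := odd_step m hm hj
  rw [hu, phiW_append] at h
  have h0 : phiW m [0] = [0, 1] := by
    rw [phiW_cons, phiL_zero m hm, phiW_nil, List.append_nil]
  rw [h0] at h
  -- h : phiW m u ++ [0, 1] = 0 :: zsw m (j+1)
  have h' : (phiW m u ++ [0]) ++ [1] = 0 :: zsw m (j+1) := by
    rw [List.append_assoc]
    exact h
  rcases List.exists_cons_of_ne_nil (l := phiW m u ++ [0]) (by simp) with ⟨c, w, hcw⟩
  rw [hcw] at h'
  have := (List.cons.injEq _ _ _ _).mp h'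
  exact ⟨w, this.2.symm⟩

lemma split_phi (m : ℕ) : ∀ (P s r : List ℕ), phiW m P = s ++ 0 :: r →
    ∃ P₁ P₂, P = P₁ ++ P₂ ∧ phiW m P₁ = s ∧ phiW m P₂ = 0 :: r := by
  intro P
  induction P with
  | nil =>
    intro s r h
    rw [phiW_nil] at h
    exact absurd h.symm (by simp)
  | cons a P IH =>
    intro s r h
    rcases s with _ | ⟨x, s⟩
    · exact ⟨[], a :: P, rfl, rfl, by simpa using h⟩
    · rw [phiW_cons] at h
      by_cases ha : a = m - 1
      · rw [phiL, if_pos ha] at h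
        simp only [List.cons_append, List.nil_append, List.cons.injEq] at h
        obtain ⟨hx, h⟩ := h
        obtain ⟨P₁, P₂, hP, h1, h2⟩ := IH s r h
        refine ⟨a :: P₁, P₂, by simp [hP], ?_, h2⟩
        rw [phiW_cons, phiL, if_pos ha, h1, hx]
        rfl
      · rw [phiL, if_neg ha] at h
        rcases s with _ | ⟨y, s⟩
        · simp only [List.cons_append, List.nil_append, List.cons.injEq] at h
          omega
        · simp only [List.cons_append, List.cons.injEq] at h
          obtain ⟨hx, hy, h⟩ := h
          obtain ⟨P₁, P₂, hP, h1, h2⟩ := IH s r h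
          refine ⟨a :: P₁, P₂, by simp [hP], ?_, h2⟩
          rw [phiW_cons, phiL, if_neg ha, h1, hx, hy]
          rfl

lemma pre_phi (m : ℕ) (hm : 2 ≤ m) : ∀ (x y r : List ℕ), phiW m x ++ r = phiW m y →
    (r = [] ∨ r.head? = some 0 ∨ (∃ c, x.getLast? = some c ∧ c ≠ m - 1)) →
    x <+: y := by
  intro x
  induction x with
  | nil => intro y r _ _; exact List.nil_prefix
  | cons a x IH =>
    intro y r h hcond
    rcases y with _ | ⟨b, y⟩
    · exfalso
      rw [phiW_nil, phiW_cons] at h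
      have : phiL m a ≠ [] := by unfold phiL; split <;> simp
      rcases List.exists_cons_of_ne_nil this with ⟨c, w, hcw⟩
      rw [hcw] at h
      simp at h
    · rw [phiW_cons, phiW_cons] at h
      by_cases ha : a = m - 1 <;> by_cases hb : b = m - 1
      · -- a = b = m-1
        rw [phiL, if_pos ha, phiL, if_pos hb] at h
        simp only [List.cons_append, List.nil_append, List.cons.injEq, true_and] at h
        subst ha; subst hb
        rcases x with _ | ⟨c, x'⟩
        · exact List.cons_prefix_cons.mpr ⟨rfl, List.nil_prefix⟩
        · refine List.cons_prefix_cons.mpr ⟨rfl, IH y r h ?_⟩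
          rcases hcond with h1 | h2 | ⟨d, hd, hdm⟩
          · exact Or.inl h1
          · exact Or.inr (Or.inl h2)
          · refine Or.inr (Or.inr ⟨d, ?_, hdm⟩)
            rwa [List.getLast?_cons_cons] at hd
      · -- a = m-1, b ≠ m-1
        exfalso
        rw [phiL, if_pos ha, phiL, if_neg hb] at h
        simp only [List.cons_append, List.nil_append, List.cons.injEq, true_and] at h
        -- h : phiW m x ++ r = (b+1) :: phiW m y
        rcases x with _ | ⟨c, x'⟩
        · rw [phiW_nil, List.nil_append] at h
          rcases hcond with h1 | h2 | ⟨d, hd, hdm⟩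
          · subst h1; simp at h
          · rw [h] at h2; simp at h2
          · simp at hd; subst hd; exact hdm ha
        · obtain ⟨v, hv⟩ := phiW_head m (u := c :: x') (by simp)
          rw [hv] at h
          simp at h
      · -- a ≠ m-1, b = m-1
        exfalso
        rw [phiL, if_neg ha, phiL, if_pos hb] at h
        simp only [List.cons_append, List.nil_append, List.cons.injEq, true_and] at h
        -- h : (a+1) :: (phiW m x ++ r) = phiW m y
        rcases y with _ | ⟨d, y'⟩
        · rw [phiW_nil] at h; simp at h
        · obtain ⟨v, hv⟩ := phiW_head m (u := d :: y') (by simp)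
          rw [hv] at h
          simp at h
      · -- a ≠ m-1, b ≠ m-1
        rw [phiL, if_neg ha, phiL, if_neg hb] at h
        simp only [List.cons_append, List.nil_append, List.cons.injEq, true_and] at h
        obtain ⟨hab, h⟩ := h
        have hab' : a = b := by omega
        subst hab'
        rcases x with _ | ⟨c, x'⟩
        · exact List.cons_prefix_cons.mpr ⟨rfl, List.nil_prefix⟩
        · refine List.cons_prefix_cons.mpr ⟨rfl, IH y r h ?_⟩
          rcases hcond with h1 | h2 | ⟨d, hd, hdm⟩
          · exact Or.inl h1
          · exact Or.inr (Or.inl h2)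
          · refine Or.inr (Or.inr ⟨d, ?_, hdm⟩)
            rwa [List.getLast?_cons_cons] at hd

lemma nz_phi (m : ℕ) : ∀ (P s r : List ℕ) (c : ℕ), s ++ (c+1) :: r = phiW m P →
    ∃ s₀, s = s₀ ++ [0] := by
  intro P
  induction P with
  | nil =>
    intro s r c h
    rw [phiW_nil] at h
    exact absurd h (by simp)
  | cons a P IH =>
    intro s r c h
    rw [phiW_cons] at h
    by_cases ha : a = m - 1
    · rw [phiL, if_pos ha] at h
      rcases s with _ | ⟨x, s⟩
      · simp only [List.nil_append, List.cons_append, List.cons.injEq] at h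
        omega
      · simp only [List.cons_append, List.nil_append, List.cons.injEq] at h
        obtain ⟨hx, h⟩ := h
        obtain ⟨s₀, hs⟩ := IH s r c h
        exact ⟨x :: s₀, by rw [hs, hx]; rfl⟩
    · rw [phiL, if_neg ha] at h
      rcases s with _ | ⟨x, s⟩
      · simp only [List.nil_append, List.cons_append, List.cons.injEq] at h
        omega
      · rcases s with _ | ⟨y, s⟩
        · simp only [List.cons_append, List.nil_append, List.cons.injEq] at h
          exact ⟨[], by rw [h.1]; rfl⟩
        · simp only [List.cons_append, List.cons.injEq] at h
          obtain ⟨hx, hy, h⟩ := h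
          obtain ⟨s₀, hs⟩ := IH s r c h
          exact ⟨x :: y :: s₀, by rw [hs, hx, hy]; rfl⟩

lemma host_eq (m n : ℕ) :
    (((List.range n).map (fun k => zsw m (k + 1))).flatten) = asc m 1 n := by
  unfold asc
  refine congrArg List.flatten ?_
  apply List.map_congr_left
  intro j _
  congr 1
  omega

lemma hostB (m : ℕ) (hm : 2 ≤ m) (n : ℕ) :
    asc m 1 (n+1) = phiW m (asc m 1 n) ++ pad (n+1) := by
  have h := TA m (n+1) (fun j _ => Sthm m hm j) n 1 (by omega)
  -- h : phiW m (asc m 1 n) ++ pad (1 + n) = pad 1 ++ asc m (1+1) n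
  have e1 : pad (1 + n) = pad (n + 1) := pad_congr (by omega)
  rw [e1] at h
  rw [h]
  have : pad 1 = [0] := rfl
  rw [this, asc_succ_front, zsw_one]

lemma aux_main (m : ℕ) (hm : 2 ≤ m) : ∀ n, 1 ≤ n → ¬ zsw m (n + 1) <:+: asc m 1 n := by
  intro n
  induction n using Nat.strong_induction_on with
  | _ n IH =>
  intro hn hinf
  rcases Nat.lt_or_ge n 2 with hn2 | hn2
  · -- n = 1
    have : n = 1 := by omega
    subst this
    have h1 : asc m 1 1 = [0] := by
      rw [asc_succ_front, asc_zero, zsw_one]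
      simp
    have hz2 : zsw m 2 = [1] := by
      have h := zsw_small' m 2 le_rfl hm
      simpa [dsc_zero, asc_zero] using h
    rw [h1, hz2] at hinf
    have := hinf.subset (by simp : (1:ℕ) ∈ [1])
    simp at this
  · -- n = k+1, k ≥ 1
    obtain ⟨k, rfl⟩ : ∃ k, n = k + 1 := ⟨n - 1, by omega⟩
    have hk1 : 1 ≤ k := by omega
    have hB := hostB m hm k
    set P := asc m 1 k with hPdef
    have IHk : ¬ zsw m (k + 1) <:+: P := IH k (by omega) hk1
    obtain ⟨s, t, hst⟩ := hinf
    rcases Nat.even_or_odd (k+1) with hEv | hOdd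
    · -- k+1 even
      have hz : zsw m (k+1+1) = phiW m (zsw m (k+1)) ++ [0] := even_step m hm hEv
      have hpad : pad (k+1) = [] := by simp [pad, Nat.even_iff.mp hEv]
      rw [hB, hpad, List.append_nil] at hst
      have hz' : zsw m (k+1+1) = zsw m (k+2) := rfl
      rw [← hz', hz] at hst
      have hst' : phiW m P = (s ++ phiW m (zsw m (k+1))) ++ 0 :: t := by
        rw [← hst]
        simp [List.append_assoc]
      obtain ⟨P₁, P₂, hP, h1, _⟩ := split_phi m P _ _ hst'
      have hne : zsw m (k+1) ≠ [] := zsw_ne_nil m hm (k+1) (by omega)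
      obtain ⟨v, hv⟩ := phiW_head m hne
      have h1' : phiW m P₁ = s ++ 0 :: v := by rw [h1, hv]
      obtain ⟨Q₁, Q₂, hQ, _, g2⟩ := split_phi m P₁ _ _ h1'
      have hpq : phiW m (zsw m (k+1)) ++ [] = phiW m Q₂ := by
        rw [List.append_nil, hv, g2]
      have hpre : zsw m (k+1) <+: Q₂ := pre_phi m hm _ _ _ hpq (Or.inl rfl)
      apply IHk
      have i2 : Q₂ <:+: P₁ := ⟨Q₁, [], by simp [hQ]⟩
      have i3 : P₁ <:+: P := ⟨[], P₂, by simp [hP]⟩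
      exact hpre.isInfix.trans (i2.trans i3)
    · -- k+1 odd
      have hz : phiW m (zsw m (k+1)) = 0 :: zsw m (k+1+1) := odd_step m hm hOdd
      have hpad : pad (k+1) = [0] := by simp [pad, Nat.odd_iff.mp hOdd]
      rw [hB, hpad] at hst
      -- hst : s ++ zsw m (k+2) ++ t = phiW m P ++ [0]
      obtain ⟨w, hw⟩ := even_head m hm hOdd   -- zsw m (k+1+1) = 1 :: w
      obtain ⟨w', hw'⟩ := even_last m hm hOdd -- zsw m (k+1+1) = w' ++ [1]
      obtain ⟨u0, hu0⟩ := odd_last m hm hOdd  -- zsw m (k+1) = u0 ++ [0]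
      have hz2' : zsw m (k+2) = zsw m (k+1+1) := rfl
      rw [hz2'] at hst
      rcases List.eq_nil_or_concat t with rfl | ⟨t₁, c, rfl⟩
      · rw [hw'] at hst
        have h' : (s ++ w') ++ [1] = phiW m P ++ [0] := by
          rw [← hst]
          simp [List.append_assoc]
        have := (List.append_inj' h' rfl).2
        simp at this
      · have hst2 : (s ++ zsw m (k+1+1) ++ t₁) ++ [c] = phiW m P ++ [0] := by
          rw [← hst]
          simp [List.append_assoc]
        have hmain : s ++ zsw m (k+1+1) ++ t₁ = phiW m P := (List.append_inj' hst2 rfl).1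
        have hnz : ∃ s₀, s = s₀ ++ [0] := by
          apply nz_phi m P s (w ++ t₁) 0
          rw [hw] at hmain
          rw [← hmain]
          simp [List.append_assoc]
        obtain ⟨s₀, rfl⟩ := hnz
        have hsp : phiW m P = s₀ ++ 0 :: (zsw m (k+1+1) ++ t₁) := by
          rw [← hmain]
          simp [List.append_assoc]
        obtain ⟨P₁, P₂, hP, _, h2⟩ := split_phi m P _ _ hsp
        have h2' : phiW m (zsw m (k+1)) ++ t₁ = phiW m P₂ := by
          rw [h2, hz]
          rfl
        have hlast : (zsw m (k+1)).getLast? = some 0 := by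
          rw [hu0]
          simp
        have hpre : zsw m (k+1) <+: P₂ :=
          pre_phi m hm _ _ _ h2' (Or.inr (Or.inr ⟨0, hlast, by omega⟩))
        apply IHk
        have i3 : P₂ <:+: P := ⟨P₁, [], by simp [hP]⟩
        exact hpre.isInfix.trans i3


/-- For all `n ≥ 1`, the p-singular word `zₙ` is not a factor of the product
`z₀ z₁ ⋯ z_{n-1}`. -/
theorem psingular_not_infix_prod (m : ℕ) (hm : 2 ≤ m) (n : ℕ) (hn : 1 ≤ n) :
    ¬ zsw m (n + 1) <:+: (((List.range n).map (fun k => zsw m (k + 1))).flatten) := by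
  rw [host_eq]
  exact aux_main m hm n hn
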